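/- Consider a root triangle uniformly refined to level L with an assigned root type τ ∈ {0,1}. If τ = 0, then every contiguous TM segment of level-L subtriangles that contains the last subtriangle in TM order is face-connected (a single face-connected component). If τ = 1, then every contiguous TM segment that contains the first subtriangle in TM order is face-connected. -/

import Mathlib

/-!
For a type-`0` root, every level-`L` subtriangle other than the last one has a face-neighbour
that comes later in TM order. Following such neighbours from any member of a segment that
contains the last subtriangle never leaves the segment and ends at the last subtriangle.

The later neighbour is found by induction on the level. Inside a child, either the child's own
curve provides it, or the subtriangle lies on the edge through which the child's curve leaves;
then the subtriangle at the same place on that edge in the next child along the curve is a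
face-neighbour, since a line through the common edge separates the two children.

Reversing the vertex order of the root swaps the two types and reverses the TM order. This
turns the type-`0` statement into the type-`1` statement about earlier neighbours and the first
subtriangle.
-/

/-- Points of the plane. -/
abbrev TMV : Type := Fin 2 → ℝ

/-- Midpoint of two points of the plane. -/
noncomputable def tmMid (a b : TMV) : TMV := (1 / 2 : ℝ) • (a + b)

/-- Bey's refinement: the four children of a triangle `[x 0, x 1, x 2]`. -/
noncomputable def beyChild (x : Fin 3 → TMV) : Fin 4 → Fin 3 → TMV :=
  ![![x 0, tmMid (x 0) (x 1), tmMid (x 0) (x 2)],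
    ![tmMid (x 0) (x 1), x 1, tmMid (x 1) (x 2)],
    ![tmMid (x 0) (x 2), tmMid (x 1) (x 2), x 2],
    ![tmMid (x 0) (x 1), tmMid (x 0) (x 2), tmMid (x 1) (x 2)]]

/-- The vertices of the subtriangle of the root `x` reached by the successive
child choices recorded in the list `p`. -/
noncomputable def tmVerts (x : Fin 3 → TMV) : List (Fin 4) → Fin 3 → TMV
  | [] => x
  | i :: p => tmVerts (beyChild x i) p

/-- The type of the subtriangle reached by path `p` from a root of type `τ`:
children `T_0, T_1, T_2` inherit the parent's type, `T_3` has the opposite type. -/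
def tmType (τ : Fin 2) : List (Fin 4) → Fin 2
  | [] => τ
  | i :: p => tmType (if i = 3 then 1 - τ else τ) p

/-- The position of Bey child `i` in the TM traversal order of the children of a
parent of type `b`: order `T_0, T_1, T_3, T_2` for type 0 and `T_0, T_3, T_1, T_2`
for type 1. -/
def tmChildRank (b : Fin 2) : Fin 4 → Fin 4 :=
  if b = 0 then ![0, 1, 3, 2] else ![0, 2, 3, 1]

/-- The TM index of the level-`p.length` subtriangle given by path `p` from a root
of type `τ`, among all subtriangles of that level. -/
def tmIndex (τ : Fin 2) : List (Fin 4) → ℕ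
  | [] => 0
  | i :: p => (tmChildRank τ i : ℕ) * 4 ^ p.length + tmIndex (if i = 3 then 1 - τ else τ) p

/-- The closed triangle spanned by the three vertices. -/
def triSet (x : Fin 3 → TMV) : Set TMV := convexHull ℝ {x 0, x 1, x 2}

/-- `e` is a complete edge of the triangle with vertices `x`. -/
def triIsEdge (x : Fin 3 → TMV) (e : Set TMV) : Prop :=
  ∃ i j : Fin 3, i ≠ j ∧ e = segment ℝ (x i) (x j)

/-- Two triangles are face-neighbors if their intersection is a complete edge of both. -/
def triFaceNbr (x y : Fin 3 → TMV) : Prop :=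
  ∃ e, triIsEdge x e ∧ triIsEdge y e ∧ triSet x ∩ triSet y = e

/-- A set `S` of subtriangle paths (with root vertices `x0`) is face-connected. -/
def triFaceConnected (x0 : Fin 3 → TMV) (S : Set (List (Fin 4))) : Prop :=
  ∀ p ∈ S, ∀ q ∈ S,
    Relation.ReflTransGen
      (fun a b => a ∈ S ∧ b ∈ S ∧ triFaceNbr (tmVerts x0 a) (tmVerts x0 b)) p q

/-- `S` has at most `n` face-connected components. -/
def triCompBound (x0 : Fin 3 → TMV) (S : Set (List (Fin 4))) (n : ℕ) : Prop :=
  ∃ f : Fin n → Set (List (Fin 4)), S = ⋃ i, f i ∧ ∀ i, triFaceConnected x0 (f i)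

/-- `S` is a contiguous segment of the TM curve through the uniform level-`L`
refinement of a root of type `τ`: a set of level-`L` paths forming an interval
in the TM order. -/
def tmSegment (τ : Fin 2) (L : ℕ) (S : Set (List (Fin 4))) : Prop :=
  (∀ p ∈ S, p.length = L) ∧
  ∀ p q r : List (Fin 4), p.length = L → q.length = L → r.length = L →
    p ∈ S → r ∈ S → tmIndex τ p ≤ tmIndex τ q → tmIndex τ q ≤ tmIndex τ r → q ∈ S

theorem tmMid_comm (a b : TMV) : tmMid a b = tmMid b a := by
  rw [tmMid, tmMid, add_comm]

theorem AffineMap.map_tmMid (φ : TMV →ᵃ[ℝ] ℝ) (a b : TMV) :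
    φ (tmMid a b) = (φ a + φ b) / 2 := by
  have : tmMid a b = midpoint ℝ a b := by rw [midpoint_eq_smul_add, tmMid]; norm_num
  rw [this, φ.map_midpoint, midpoint_eq_smul_add, smul_eq_mul, invOf_eq_inv]
  ring

def cornerChild (a : Fin 3) : Fin 4 := a.castSucc

theorem beyChild_cornerChild (x : Fin 3 → TMV) (a k : Fin 3) :
    beyChild x (cornerChild a) k = if k = a then x a else tmMid (x a) (x k) := by
  fin_cases a <;> fin_cases k <;> simp [beyChild, cornerChild] <;> exact tmMid_comm _ _

theorem mem_segment_of_mem_convexHull_of_nonpos {E : Type*} [AddCommGroup E] [Module ℝ E]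
    (φ : E →ᵃ[ℝ] ℝ) {u v w z : E} (hu : φ u = 0) (hv : φ v = 0) (hw : 0 < φ w)
    (hz : z ∈ convexHull ℝ {w, u, v}) (hφz : φ z ≤ 0) : z ∈ segment ℝ u v := by
  rw [convexHull_insert (by simp), mem_convexJoin, convexHull_pair] at hz
  obtain ⟨_, rfl, z', hz', α, β, hα, hβ, hαβ, rfl⟩ := hz
  have hφz' : φ z' = 0 := by
    obtain ⟨γ, δ, -, -, hγδ, rfl⟩ := hz'
    rw [Convex.combo_affine_apply hγδ, hu, hv]; simp
  rw [Convex.combo_affine_apply hαβ, hφz', smul_zero, add_zero, smul_eq_mul] at hφz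
  obtain rfl : α = 0 := le_antisymm (nonpos_of_mul_nonpos_left hφz hw) hα
  simpa [show β = 1 by linarith] using hz'

theorem exists_triSet_eq_convexHull (x : Fin 3 → TMV) {a b : Fin 3} (hab : a ≠ b) :
    ∃ e, e ≠ a ∧ e ≠ b ∧ triSet x = convexHull ℝ {x e, x a, x b} := by
  obtain ⟨e, hea, heb⟩ : ∃ e, e ≠ a ∧ e ≠ b := by revert a b; decide
  refine ⟨e, hea, heb, congrArg (convexHull ℝ) ?_⟩
  ext z
  simp only [Set.mem_insert_iff, Set.mem_singleton_iff]
  fin_cases a <;> fin_cases b <;> fin_cases e <;> simp at hab hea heb ⊢ <;> tauto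

theorem triFaceNbr.symm {X Y : Fin 3 → TMV} (h : triFaceNbr X Y) : triFaceNbr Y X :=
  let ⟨e, hX, hY, hXY⟩ := h
  ⟨e, hY, hX, Set.inter_comm _ _ ▸ hXY⟩

structure SeparatedAlong (φ : TMV →ᵃ[ℝ] ℝ) (X Y : Fin 3 → TMV) (a b c d : Fin 3) :
    Prop where
  ne_left : a ≠ b
  ne_right : c ≠ d
  eq_fst : X a = Y c
  eq_snd : X b = Y d
  map_fst : φ (X a) = 0
  map_snd : φ (X b) = 0
  pos : ∀ k, k ≠ a → k ≠ b → 0 < φ (X k)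
  neg : ∀ k, k ≠ c → k ≠ d → φ (Y k) < 0

namespace SeparatedAlong

variable {φ : TMV →ᵃ[ℝ] ℝ} {X Y : Fin 3 → TMV} {a b c d : Fin 3}

theorem swap (h : SeparatedAlong φ X Y a b c d) : SeparatedAlong φ X Y b a d c where
  ne_left := h.ne_left.symm
  ne_right := h.ne_right.symm
  eq_fst := h.eq_snd
  eq_snd := h.eq_fst
  map_fst := h.map_snd
  map_snd := h.map_fst
  pos k hb ha := h.pos k ha hb
  neg k hd hc := h.neg k hc hd

theorem beyChild_cornerChild (h : SeparatedAlong φ X Y a b c d) :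
    SeparatedAlong φ (beyChild X (cornerChild a)) (beyChild Y (cornerChild c)) a b c d where
  ne_left := h.ne_left
  ne_right := h.ne_right
  eq_fst := by
    rw [_root_.beyChild_cornerChild, _root_.beyChild_cornerChild, if_pos rfl, if_pos rfl, h.eq_fst]
  eq_snd := by
    simp only [_root_.beyChild_cornerChild, if_neg h.ne_left.symm, if_neg h.ne_right.symm,
      h.eq_fst, h.eq_snd]
  map_fst := by rw [_root_.beyChild_cornerChild, if_pos rfl, h.map_fst]
  map_snd := by
    simp only [_root_.beyChild_cornerChild, if_neg h.ne_left.symm, φ.map_tmMid, h.map_fst,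
      h.map_snd]
    norm_num
  pos k hka hkb := by
    simp only [_root_.beyChild_cornerChild, if_neg hka, φ.map_tmMid, h.map_fst]
    linarith [h.pos k hka hkb]
  neg k hkc hkd := by
    simp only [_root_.beyChild_cornerChild, if_neg hkc, φ.map_tmMid, ← h.eq_fst, h.map_fst]
    linarith [h.neg k hkc hkd]

theorem triFaceNbr (h : SeparatedAlong φ X Y a b c d) : _root_.triFaceNbr X Y := by
  obtain ⟨e, hea, heb, hX⟩ := exists_triSet_eq_convexHull X h.ne_left
  obtain ⟨f, hfc, hfd, hY⟩ := exists_triSet_eq_convexHull Y h.ne_right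
  rw [← h.eq_fst, ← h.eq_snd] at hY
  have hY_nonpos : triSet Y ⊆ {z | φ z ≤ 0} := by
    rw [hY]
    refine convexHull_min ?_ ((convex_Iic 0).affine_preimage φ)
    rintro z (rfl | rfl | rfl) <;> simp [h.map_fst, h.map_snd, (h.neg f hfc hfd).le]
  have hedge : ∀ w, segment ℝ (X a) (X b) ⊆ convexHull ℝ {w, X a, X b} := fun w => by
    rw [← convexHull_pair]; exact convexHull_mono (Set.subset_insert w _)
  refine ⟨segment ℝ (X a) (X b), ⟨a, b, h.ne_left, rfl⟩,
    ⟨c, d, h.ne_right, by rw [h.eq_fst, h.eq_snd]⟩, ?_⟩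
  refine Set.Subset.antisymm (fun z ⟨hzX, hzY⟩ => ?_) (Set.subset_inter ?_ ?_)
  · rw [hX] at hzX
    exact mem_segment_of_mem_convexHull_of_nonpos φ h.map_fst h.map_snd (h.pos e hea heb) hzX
      (hY_nonpos hzY)
  · rw [hX]; exact hedge _
  · rw [hY]; exact hedge _

end SeparatedAlong

/-- The path to the level-`s.length` subtriangle along the edge `[x a, x b]` that is reached by
moving towards `x b` at the steps where `s` is `true` and towards `x a` elsewhere. -/
def edgePath (a b : Fin 3) (s : List Bool) : List (Fin 4) :=
  s.map fun t => cornerChild (if t then b else a)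

@[simp] theorem length_edgePath (a b : Fin 3) (s : List Bool) :
    (edgePath a b s).length = s.length := List.length_map _

theorem SeparatedAlong.triFaceNbr_edgePath {φ : TMV →ᵃ[ℝ] ℝ} {a b c d : Fin 3}
    (s : List Bool) :
    ∀ {X Y : Fin 3 → TMV}, SeparatedAlong φ X Y a b c d →
      _root_.triFaceNbr (tmVerts X (edgePath a b s)) (tmVerts Y (edgePath c d s)) := by
  induction s with
  | nil => exact fun h => h.triFaceNbr
  | cons t s ih =>
    intro X Y h
    cases t
    · exact ih h.beyChild_cornerChild
    · exact ih h.swap.beyChild_cornerChild.swap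

theorem AffineIndependent.beyChild {x : Fin 3 → TMV} (hx : AffineIndependent ℝ x) (i : Fin 4) :
    AffineIndependent ℝ (beyChild x i) := by
  suffices ∃ (c : TMV) (r : ℝ) (σ : Equiv.Perm (Fin 3)), r ≠ 0 ∧
      _root_.beyChild x i = AffineMap.homothety c r ∘ x ∘ σ by
    obtain ⟨c, r, σ, hr, heq⟩ := this
    rw [heq]
    exact (hx.comp_embedding σ.toEmbedding).map' _ (AffineMap.homothety_injective c hr)
  -- `T₃ = [x₀₁, x₀₂, x₁₂]` is `[x₂, x₁, x₀]` scaled by `-1/2` about the centroid.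
  fin_cases i <;>
    [refine ⟨x 0, 1 / 2, 1, by norm_num, ?_⟩; refine ⟨x 1, 1 / 2, 1, by norm_num, ?_⟩;
      refine ⟨x 2, 1 / 2, 1, by norm_num, ?_⟩;
      refine ⟨(1 / 3 : ℝ) • (x 0 + x 1 + x 2), -1 / 2, Fin.revPerm, by norm_num, ?_⟩] <;>
    funext k <;> fin_cases k <;>
    simp [_root_.beyChild, tmMid, AffineMap.homothety_apply] <;> module

theorem AffineIndependent.exists_affineBasis {x : Fin 3 → TMV} (hx : AffineIndependent ℝ x) :
    ∃ B : AffineBasis (Fin 3) ℝ TMV, ⇑B = x :=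
  ⟨⟨x, hx, by rw [hx.affineSpan_eq_top_iff_card_eq_finrank_add_one]; simp⟩, rfl⟩

/- In barycentric coordinates `λ` of `x`, the functional `λ i - λ j - λ k = 2 λ i - 1` vanishes
on the midline opposite `x i`, which carries the common edge of the two children. -/
theorem triFaceNbr_edgePath_zero_three {x : Fin 3 → TMV} (hx : AffineIndependent ℝ x)
    (s : List Bool) :
    triFaceNbr (tmVerts x (0 :: edgePath 1 2 s)) (tmVerts x (3 :: edgePath 0 1 s)) := by
  obtain ⟨B, rfl⟩ := hx.exists_affineBasis
  refine SeparatedAlong.triFaceNbr_edgePath (φ := B.coord 0 - B.coord 1 - B.coord 2) s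
    ⟨by decide, by decide, rfl, rfl, ?_, ?_, fun k h1 h2 => ?_, fun k h1 h2 => ?_⟩ <;>
  (try fin_cases k) <;> simp_all [beyChild, AffineMap.map_tmMid]

theorem triFaceNbr_edgePath_one_three {x : Fin 3 → TMV} (hx : AffineIndependent ℝ x)
    (s : List Bool) :
    triFaceNbr (tmVerts x (1 :: edgePath 0 2 s)) (tmVerts x (3 :: edgePath 0 2 s)) := by
  obtain ⟨B, rfl⟩ := hx.exists_affineBasis
  refine SeparatedAlong.triFaceNbr_edgePath (φ := B.coord 1 - B.coord 0 - B.coord 2) s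
    ⟨by decide, by decide, rfl, rfl, ?_, ?_, fun k h1 h2 => ?_, fun k h1 h2 => ?_⟩ <;>
  (try fin_cases k) <;> simp_all [beyChild, AffineMap.map_tmMid]

theorem triFaceNbr_edgePath_three_two {x : Fin 3 → TMV} (hx : AffineIndependent ℝ x)
    (s : List Bool) :
    triFaceNbr (tmVerts x (3 :: edgePath 1 2 s)) (tmVerts x (2 :: edgePath 0 1 s)) := by
  obtain ⟨B, rfl⟩ := hx.exists_affineBasis
  refine SeparatedAlong.triFaceNbr_edgePath (φ := B.coord 0 + B.coord 1 - B.coord 2) s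
    ⟨by decide, by decide, rfl, rfl, ?_, ?_, fun k h1 h2 => ?_, fun k h1 h2 => ?_⟩ <;>
  (try fin_cases k) <;> simp_all [beyChild, AffineMap.map_tmMid]

theorem tmIndex_lt (τ : Fin 2) (p : List (Fin 4)) : tmIndex τ p < 4 ^ p.length := by
  induction p generalizing τ with
  | nil => simp [tmIndex]
  | cons i p ih =>
    have hi : (tmChildRank τ i : ℕ) + 1 ≤ 4 := (tmChildRank τ i).isLt
    have := Nat.mul_le_mul_right (4 ^ p.length) hi
    rw [tmIndex, List.length_cons, pow_succ']
    linarith [ih (if i = 3 then 1 - τ else τ)]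

def HasLaterNbr (τ : Fin 2) (x : Fin 3 → TMV) (p : List (Fin 4)) : Prop :=
  ∃ q : List (Fin 4), q.length = p.length ∧ tmIndex τ p < tmIndex τ q ∧
    triFaceNbr (tmVerts x p) (tmVerts x q)

def HasEarlierNbr (τ : Fin 2) (x : Fin 3 → TMV) (p : List (Fin 4)) : Prop :=
  ∃ q : List (Fin 4), q.length = p.length ∧ tmIndex τ q < tmIndex τ p ∧
    triFaceNbr (tmVerts x p) (tmVerts x q)

theorem HasLaterNbr.cons {τ : Fin 2} {x : Fin 3 → TMV} {i : Fin 4} {p : List (Fin 4)}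
    (h : HasLaterNbr τ (beyChild x i) p) (hi : i ≠ 3) : HasLaterNbr τ x (i :: p) := by
  obtain ⟨q, hlen, hlt, hnbr⟩ := h
  exact ⟨i :: q, by simp [hlen], by simp only [tmIndex, hlen, if_neg hi]; omega, hnbr⟩

theorem HasLaterNbr.cons_three {τ : Fin 2} {x : Fin 3 → TMV} {p : List (Fin 4)}
    (h : HasLaterNbr τ (beyChild x 3) p) : HasLaterNbr (1 - τ) x (3 :: p) := by
  obtain ⟨q, hlen, hlt, hnbr⟩ := h
  exact ⟨3 :: q, by simp [hlen], by simp only [tmIndex, hlen, if_pos, sub_sub_cancel]; omega,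
    hnbr⟩

theorem hasLaterNbr_cons_of_triFaceNbr {τ : Fin 2} {x : Fin 3 → TMV} {i j : Fin 4}
    {p q : List (Fin 4)} (hij : tmChildRank τ i < tmChildRank τ j) (hlen : q.length = p.length)
    (h : triFaceNbr (tmVerts x (i :: p)) (tmVerts x (j :: q))) : HasLaterNbr τ x (i :: p) := by
  refine ⟨j :: q, by simp [hlen], ?_, h⟩
  have := Nat.mul_le_mul_right (4 ^ p.length) (Nat.succ_le_of_lt hij)
  simp only [tmIndex, hlen]
  linarith [tmIndex_lt (if i = 3 then 1 - τ else τ) p]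

def OnEdge (a b : Fin 3) (p : List (Fin 4)) : Prop :=
  ∃ s, p = edgePath a b s

theorem OnEdge.cons_fst {a b : Fin 3} {p : List (Fin 4)} (h : OnEdge a b p) :
    OnEdge a b (cornerChild a :: p) := by
  obtain ⟨s, rfl⟩ := h
  exact ⟨false :: s, rfl⟩

theorem OnEdge.cons_snd {a b : Fin 3} {p : List (Fin 4)} (h : OnEdge a b p) :
    OnEdge a b (cornerChild b :: p) := by
  obtain ⟨s, rfl⟩ := h
  exact ⟨true :: s, rfl⟩

theorem hasLaterNbr_zero_cons_of_onEdge {x : Fin 3 → TMV} (hx : AffineIndependent ℝ x)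
    (τ : Fin 2) {p : List (Fin 4)} (h : OnEdge 1 2 p) : HasLaterNbr τ x (0 :: p) := by
  obtain ⟨s, rfl⟩ := h
  exact hasLaterNbr_cons_of_triFaceNbr (j := 3) (by fin_cases τ <;> decide) (by simp)
    (triFaceNbr_edgePath_zero_three hx s)

theorem hasLaterNbr_one_cons_of_onEdge {x : Fin 3 → TMV} (hx : AffineIndependent ℝ x)
    {p : List (Fin 4)} (h : OnEdge 0 2 p) : HasLaterNbr 0 x (1 :: p) := by
  obtain ⟨s, rfl⟩ := h
  exact hasLaterNbr_cons_of_triFaceNbr (j := 3) (by decide) (by simp)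
    (triFaceNbr_edgePath_one_three hx s)

theorem hasLaterNbr_three_cons_of_onEdge {x : Fin 3 → TMV} (hx : AffineIndependent ℝ x)
    (τ : Fin 2) {p : List (Fin 4)} (h : OnEdge 1 2 p) : HasLaterNbr τ x (3 :: p) := by
  obtain ⟨s, rfl⟩ := h
  exact hasLaterNbr_cons_of_triFaceNbr (j := 2) (by fin_cases τ <;> decide) (by simp)
    (triFaceNbr_edgePath_three_two hx s)

/-- Off the edges through which the TM curve leaves a triangle, every subtriangle has a later
face-neighbour. The curve of a type-`0` triangle ends in the corner `x 2` and can leave across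
either edge there; the curve of a type-`1` triangle can only leave across `[x 1, x 2]`. -/
structure ExitsLater (x : Fin 3 → TMV) (p : List (Fin 4)) : Prop where
  type0_edge12 : HasLaterNbr 0 x p ∨ OnEdge 1 2 p
  type0_edge02 : HasLaterNbr 0 x p ∨ OnEdge 0 2 p
  type1_edge12 : HasLaterNbr 1 x p ∨ OnEdge 1 2 p

namespace ExitsLater

variable {x : Fin 3 → TMV} {p : List (Fin 4)}

theorem cons_zero (hx : AffineIndependent ℝ x) (h : ExitsLater (beyChild x 0) p) :
    ExitsLater x (0 :: p) where
  type0_edge12 := .inl <| h.type0_edge12.elim (·.cons (by decide))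
    (hasLaterNbr_zero_cons_of_onEdge hx 0)
  type0_edge02 := h.type0_edge02.imp (·.cons (by decide)) OnEdge.cons_fst
  type1_edge12 := .inl <| h.type1_edge12.elim (·.cons (by decide))
    (hasLaterNbr_zero_cons_of_onEdge hx 1)

theorem cons_one (hx : AffineIndependent ℝ x) (h : ExitsLater (beyChild x 1) p) :
    ExitsLater x (1 :: p) where
  type0_edge12 := h.type0_edge12.imp (·.cons (by decide)) OnEdge.cons_fst
  type0_edge02 := .inl <| h.type0_edge02.elim (·.cons (by decide))
    (hasLaterNbr_one_cons_of_onEdge hx)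
  type1_edge12 := h.type1_edge12.imp (·.cons (by decide)) OnEdge.cons_fst

theorem cons_two (h : ExitsLater (beyChild x 2) p) : ExitsLater x (2 :: p) where
  type0_edge12 := h.type0_edge12.imp (·.cons (by decide)) OnEdge.cons_snd
  type0_edge02 := h.type0_edge02.imp (·.cons (by decide)) OnEdge.cons_snd
  type1_edge12 := h.type1_edge12.imp (·.cons (by decide)) OnEdge.cons_snd

theorem cons_three (hx : AffineIndependent ℝ x) (h : ExitsLater (beyChild x 3) p) :
    ExitsLater x (3 :: p) where
  type0_edge12 := .inl <| h.type1_edge12.elim (·.cons_three)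
    (hasLaterNbr_three_cons_of_onEdge hx 0)
  type0_edge02 := .inl <| h.type1_edge12.elim (·.cons_three)
    (hasLaterNbr_three_cons_of_onEdge hx 0)
  type1_edge12 := .inl <| h.type0_edge12.elim (·.cons_three)
    (hasLaterNbr_three_cons_of_onEdge hx 1)

end ExitsLater

theorem exitsLater {x : Fin 3 → TMV} (hx : AffineIndependent ℝ x) (p : List (Fin 4)) :
    ExitsLater x p := by
  induction p generalizing x with
  | nil => exact ⟨.inr ⟨[], rfl⟩, .inr ⟨[], rfl⟩, .inr ⟨[], rfl⟩⟩
  | cons i p ih =>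
    have h := ih (hx.beyChild i)
    fin_cases i
    exacts [h.cons_zero hx, h.cons_one hx, h.cons_two, h.cons_three hx]

theorem mem_edgePath {a b : Fin 3} {s : List Bool} {i : Fin 4} (h : i ∈ edgePath a b s) :
    i = cornerChild a ∨ i = cornerChild b := by
  obtain ⟨t, -, rfl⟩ := List.mem_map.1 h
  cases t <;> simp

theorem OnEdge.eq_replicate {p : List (Fin 4)} (h₁₂ : OnEdge 1 2 p) (h₀₂ : OnEdge 0 2 p) :
    p = List.replicate p.length 2 := by
  obtain ⟨s, rfl⟩ := h₁₂
  obtain ⟨s', hs'⟩ := h₀₂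
  refine List.eq_replicate_iff.2 ⟨rfl, fun i hi => ?_⟩
  rcases mem_edgePath hi with rfl | rfl <;> rcases mem_edgePath (hs' ▸ hi) with h | h <;>
    first | rfl | exact absurd h (by decide)

theorem hasLaterNbr_of_ne_replicate {x : Fin 3 → TMV} (hx : AffineIndependent ℝ x)
    {p : List (Fin 4)} (hp : p ≠ List.replicate p.length 2) : HasLaterNbr 0 x p := by
  have h := exitsLater hx p
  rcases h.type0_edge12 with h | h₁₂
  · exact h
  rcases h.type0_edge02 with h | h₀₂
  · exact h
  exact absurd (h₁₂.eq_replicate h₀₂) hp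

/-- Reversing the vertex order of a triangle permutes its children by `revChild` and turns the
type-`0` TM order of its subtriangles into the reversed type-`1` order. -/
def revChild : Fin 4 → Fin 4 := ![2, 1, 0, 3]

theorem map_revChild_map_revChild (p : List (Fin 4)) : (p.map revChild).map revChild = p := by
  rw [List.map_map]
  conv_rhs => rw [← List.map_id p]
  congr 1
  funext i
  fin_cases i <;> rfl

theorem beyChild_comp_rev (x : Fin 3 → TMV) (i : Fin 4) :
    beyChild (x ∘ Fin.rev) i = beyChild x (revChild i) ∘ Fin.rev := by
  funext k
  fin_cases i <;> fin_cases k <;> simp [beyChild, revChild] <;> exact tmMid_comm _ _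

theorem tmVerts_comp_rev (x : Fin 3 → TMV) (p : List (Fin 4)) :
    tmVerts (x ∘ Fin.rev) p = tmVerts x (p.map revChild) ∘ Fin.rev := by
  induction p generalizing x with
  | nil => rfl
  | cons i p ih => simp only [tmVerts, List.map_cons, beyChild_comp_rev, ih]

theorem triFaceNbr.of_comp_rev {X Y : Fin 3 → TMV}
    (h : triFaceNbr (X ∘ Fin.rev) (Y ∘ Fin.rev)) : triFaceNbr X Y := by
  have hset (Z : Fin 3 → TMV) : triSet (Z ∘ Fin.rev) = triSet Z := by
    simp only [triSet, Function.comp_apply]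
    congr 1
    ext z
    simp only [Set.mem_insert_iff, Set.mem_singleton_iff]
    change z = Z 2 ∨ z = Z 1 ∨ z = Z 0 ↔ z = Z 0 ∨ z = Z 1 ∨ z = Z 2
    tauto
  have hedge (Z : Fin 3 → TMV) (e : Set TMV) : triIsEdge (Z ∘ Fin.rev) e → triIsEdge Z e :=
    fun ⟨i, j, hij, he⟩ => ⟨i.rev, j.rev, Fin.rev_injective.ne hij, he⟩
  obtain ⟨e, hX, hY, hXY⟩ := h
  exact ⟨e, hedge X e hX, hedge Y e hY, by rwa [hset, hset] at hXY⟩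

theorem tmIndex_map_revChild (τ : Fin 2) (p : List (Fin 4)) :
    tmIndex (1 - τ) (p.map revChild) + tmIndex τ p + 1 = 4 ^ p.length := by
  induction p generalizing τ with
  | nil => simp [tmIndex]
  | cons i p ih =>
    have hrank : (tmChildRank (1 - τ) (revChild i) : ℕ) + tmChildRank τ i = 3 := by
      fin_cases τ <;> fin_cases i <;> rfl
    have htype : (if revChild i = 3 then 1 - (1 - τ) else 1 - τ) =
        1 - (if i = 3 then 1 - τ else τ) := by
      fin_cases τ <;> fin_cases i <;> rfl
    have hsplit := ih (if i = 3 then 1 - τ else τ)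
    rw [List.map_cons, tmIndex, tmIndex, htype, List.length_map, List.length_cons, pow_succ']
    calc _ = ((tmChildRank (1 - τ) (revChild i) : ℕ) + tmChildRank τ i) * 4 ^ p.length +
          (tmIndex (1 - (if i = 3 then 1 - τ else τ)) (p.map revChild) +
            tmIndex (if i = 3 then 1 - τ else τ) p + 1) := by ring
      _ = 4 * 4 ^ p.length := by rw [hrank, hsplit]; ring

theorem hasEarlierNbr_of_ne_replicate {x : Fin 3 → TMV} (hx : AffineIndependent ℝ x)
    {p : List (Fin 4)} (hp : p ≠ List.replicate p.length 0) : HasEarlierNbr 1 x p := by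
  have hp' : p.map revChild ≠ List.replicate (p.map revChild).length 2 := by
    intro h
    apply hp
    have := congrArg (List.map revChild) h
    rw [map_revChild_map_revChild, List.map_replicate, List.length_map] at this
    exact this
  have hrev : AffineIndependent ℝ (x ∘ Fin.rev) := hx.comp_embedding Fin.revPerm.toEmbedding
  obtain ⟨q, hlen, hlt, hnbr⟩ := hasLaterNbr_of_ne_replicate hrev hp'
  rw [tmVerts_comp_rev, tmVerts_comp_rev, map_revChild_map_revChild] at hnbr
  refine ⟨q.map revChild, by simpa using hlen, ?_, hnbr.of_comp_rev⟩
  have hp_idx := tmIndex_map_revChild 1 p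
  have hq_idx := tmIndex_map_revChild 0 q
  rw [sub_self] at hp_idx
  rw [List.length_map] at hlen
  rw [sub_zero, hlen] at hq_idx
  omega

theorem eq_replicate_of_tmIndex_eq_pred {τ : Fin 2} {p : List (Fin 4)}
    (h : tmIndex τ p = 4 ^ p.length - 1) : p = List.replicate p.length 2 := by
  induction p generalizing τ with
  | nil => rfl
  | cons i p ih =>
    rw [tmIndex, List.length_cons, pow_succ'] at h
    have hlt := tmIndex_lt (if i = 3 then 1 - τ else τ) p
    have hrank : (tmChildRank τ i : ℕ) = 3 := by
      have : (tmChildRank τ i : ℕ) < 4 := (tmChildRank τ i).isLt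
      interval_cases (tmChildRank τ i : ℕ) <;> omega
    obtain rfl : i = 2 := by revert hrank; fin_cases τ <;> fin_cases i <;> decide
    have hrest : tmIndex (if (2 : Fin 4) = 3 then 1 - τ else τ) p = 4 ^ p.length - 1 := by
      rw [hrank] at h
      omega
    rw [List.length_cons, List.replicate_succ, ← ih hrest]

theorem eq_replicate_of_tmIndex_eq_zero {τ : Fin 2} {p : List (Fin 4)}
    (h : tmIndex τ p = 0) : p = List.replicate p.length 0 := by
  induction p generalizing τ with
  | nil => rfl
  | cons i p ih =>
    rw [tmIndex] at h
    have hrank : (tmChildRank τ i : ℕ) = 0 := by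
      have : 0 < 4 ^ p.length := by positivity
      have : (tmChildRank τ i : ℕ) < 4 := (tmChildRank τ i).isLt
      interval_cases (tmChildRank τ i : ℕ) <;> omega
    obtain rfl : i = 0 := by revert hrank; fin_cases τ <;> fin_cases i <;> decide
    have hrest : tmIndex (if (0 : Fin 4) = 3 then 1 - τ else τ) p = 0 := by
      rw [hrank, zero_mul, zero_add] at h
      exact h
    rw [List.length_cons, List.replicate_succ, ← ih hrest]

theorem triFaceConnected_of_descent {x : Fin 3 → TMV} {S : Set (List (Fin 4))}
    {M : List (Fin 4)} (f : List (Fin 4) → ℕ)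
    (hdesc : ∀ p ∈ S, p ≠ M →
      ∃ q ∈ S, f q < f p ∧ triFaceNbr (tmVerts x p) (tmVerts x q)) :
    triFaceConnected x S := by
  set R := fun a b => a ∈ S ∧ b ∈ S ∧ triFaceNbr (tmVerts x a) (tmVerts x b)
  have hreach : ∀ n, ∀ p ∈ S, f p = n → Relation.ReflTransGen R p M := by
    intro n
    induction n using Nat.strong_induction_on with
    | _ n ih =>
      intro p hp hpn
      by_cases hpM : p = M
      · exact hpM ▸ .refl
      obtain ⟨q, hq, hlt, hnbr⟩ := hdesc p hp hpM
      exact .head ⟨hp, hq, hnbr⟩ (ih (f q) (hpn ▸ hlt) q hq rfl)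
  have : Std.Symm R := ⟨fun _ _ ⟨ha, hb, h⟩ => ⟨hb, ha, h.symm⟩⟩
  intro p hp q hq
  exact (hreach _ p hp rfl).trans (Std.Symm.symm _ _ (hreach _ q hq rfl))

namespace tmSegment

variable {x : Fin 3 → TMV} {L : ℕ} {S : Set (List (Fin 4))} {M : List (Fin 4)}

theorem triFaceConnected_of_mem_last (hx : AffineIndependent ℝ x) (hS : tmSegment 0 L S)
    (hM : M ∈ S) (hM_idx : tmIndex 0 M = 4 ^ L - 1) : triFaceConnected x S := by
  have hML : M.length = L := hS.1 M hM
  have hM_eq := eq_replicate_of_tmIndex_eq_pred (hML ▸ hM_idx)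
  refine triFaceConnected_of_descent (M := M) (fun p => 4 ^ L - tmIndex 0 p) fun p hp hpM => ?_
  have hpL : p.length = L := hS.1 p hp
  obtain ⟨q, hqL, hlt, hnbr⟩ := hasLaterNbr_of_ne_replicate hx (p := p) (by
    rwa [hpL, ← hML, ← hM_eq])
  rw [hpL] at hqL
  have hq_lt := tmIndex_lt 0 q
  rw [hqL] at hq_lt
  exact ⟨q, hS.2 p q M hpL hqL hML hp hM hlt.le (by omega), by omega, hnbr⟩

theorem triFaceConnected_of_mem_first (hx : AffineIndependent ℝ x) (hS : tmSegment 1 L S)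
    (hM : M ∈ S) (hM_idx : tmIndex 1 M = 0) : triFaceConnected x S := by
  have hML : M.length = L := hS.1 M hM
  have hM_eq := eq_replicate_of_tmIndex_eq_zero hM_idx
  refine triFaceConnected_of_descent (M := M) (tmIndex 1) fun p hp hpM => ?_
  have hpL : p.length = L := hS.1 p hp
  obtain ⟨q, hqL, hlt, hnbr⟩ := hasEarlierNbr_of_ne_replicate hx (p := p) (by
    rwa [hpL, ← hML, ← hM_eq])
  rw [hpL] at hqL
  exact ⟨q, hS.2 M q p hML hqL hpL hM hp (by omega) hlt.le, hlt, hnbr⟩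

end tmSegment

/-- For a root triangle of type `τ` uniformly refined to level `L`: if `τ = 0`, every
contiguous TM segment containing the last level-`L` subtriangle in TM order is
face-connected; if `τ = 1`, every contiguous TM segment containing the first level-`L`
subtriangle in TM order is face-connected. -/
theorem tm_one_sided_segment_connected (x0 : Fin 3 → TMV)
    (hx0 : AffineIndependent ℝ x0) (L : ℕ) (τ : Fin 2)
    (S : Set (List (Fin 4))) (hS : tmSegment τ L S) :
    (τ = 0 → (∃ p ∈ S, tmIndex τ p = 4 ^ L - 1) → triFaceConnected x0 S) ∧
    (τ = 1 → (∃ p ∈ S, tmIndex τ p = 0) → triFaceConnected x0 S) := by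
  constructor
  · rintro rfl ⟨M, hM, hM_idx⟩
    exact hS.triFaceConnected_of_mem_last hx0 hM hM_idx
  · rintro rfl ⟨M, hM, hM_idx⟩
    exact hS.triFaceConnected_of_mem_first hx0 hM hM_idx
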